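/- arXiv:math/0207210 — 4 statements merged into one kernel-verified Lean document; each statement's English description precedes it below -/
import Mathlib

section
/- Let f : X → Y be a proper surjective morphism of noetherian schemes. If X is separated, then Y is separated. -/
open AlgebraicGeometry CategoryTheory CategoryTheory.Limits

/-!
Since `f` is surjective, the diagonal of `Y` is the image of the diagonal of `X` under
`f × f : X × X ⟶ Y × Y`. As `f` is universally closed, so is `f × f`, so the diagonal of `Y`
has closed image; being an immersion, it is then a closed immersion.
-/

namespace AlgebraicGeometry

lemma Scheme.Hom.range_comp_of_surjective {X Y Z : Scheme} (f : X ⟶ Y) (g : Y ⟶ Z)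
    [Surjective f] : Set.range (f ≫ g) = Set.range g := by
  rw [Scheme.Hom.comp_base, TopCat.coe_comp, Set.range_comp, f.surjective.range_eq,
    Set.image_univ]

lemma IsSeparated.of_comp_surjective {X Y Z : Scheme} (f : X ⟶ Y) (g : Y ⟶ Z)
    [IsSeparated (f ≫ g)] [Surjective f] [UniversallyClosed f] : IsSeparated g := by
  let m := pullback.map (f ≫ g) (f ≫ g) g g f f (𝟙 Z) (by simp) (by simp)
  have : UniversallyClosed m :=
    MorphismProperty.pullbackMap (P := @UniversallyClosed) ‹_› ‹_› rfl rfl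
  have hrange : Set.range (pullback.diagonal g) = m '' Set.range (pullback.diagonal (f ≫ g)) := by
    rw [← Scheme.Hom.range_comp_of_surjective f, pullback.comp_diagonal, Scheme.Hom.comp_base,
      TopCat.coe_comp, Set.range_comp]
  refine ⟨.of_isPreimmersion _ ?_⟩
  rw [hrange]
  exact m.isClosedMap _ (pullback.diagonal (f ≫ g)).isClosedEmbedding.isClosed_range

end AlgebraicGeometry

theorem isSeparated_of_proper_surjective_general {X Y : Scheme.{0}} (f : X ⟶ Y)
    [IsProper f] [Surjective f] [X.IsSeparated] :
    Y.IsSeparated := by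
  have : IsSeparated (f ≫ terminal.from Y) := by rw [terminal.comp_from]; infer_instance
  exact ⟨.of_comp_surjective f _⟩

/-- If `f : X ⟶ Y` is a proper surjective morphism of noetherian schemes and `X` is
separated, then `Y` is separated. -/
theorem isSeparated_of_proper_surjective {X Y : Scheme.{0}} (f : X ⟶ Y)
    [IsNoetherian X] [IsNoetherian Y] [IsProper f] [Surjective f] [X.IsSeparated] :
    Y.IsSeparated :=
  isSeparated_of_proper_surjective_general f
end

section
/- Let g ∘ f be a proper morphism of schemes, where f : A → B is surjective and g : B → C is separated and of finite type. Then g is proper. -/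
open AlgebraicGeometry CategoryTheory

theorem isProper_of_comp_surjective_general {A B C : Scheme.{0}} (f : A ⟶ B) (g : B ⟶ C)
    [IsProper (f ≫ g)] [Surjective f] [IsSeparated g] [LocallyOfFiniteType g] :
    IsProper g := by
  have := UniversallyClosed.of_comp_surjective f g
  constructor

/-- EGA II.5.4.3: if `g ∘ f` is proper, `f` is surjective and `g` is separated and of
finite type, then `g` is proper. -/
theorem isProper_of_comp_surjective {A B C : Scheme.{0}} (f : A ⟶ B) (g : B ⟶ C)
    [IsProper (f ≫ g)] [Surjective f] [IsSeparated g] [LocallyOfFiniteType g]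
    [QuasiCompact g] :
    IsProper g :=
  isProper_of_comp_surjective_general f g
end

section
/- Let G be a finite group acting on a quasi-affine scheme W over a commutative ring, such that every G-orbit is contained in an affine open subset of the form {f ≠ 0} for f a global regular function. Then every G-orbit is contained in an affine open subset of the form {g ≠ 0} for a G-invariant global regular function g. -/
open AlgebraicGeometry CategoryTheory

/-!
If `{f ≠ 0}` is an affine open containing the orbit of `x`, take `h = ∏_σ σ·f`. It is
`G`-invariant since `G` permutes the factors, `{h ≠ 0} = ⋂_σ σ⁻¹{f ≠ 0}` still contains the
orbit, and `{h ≠ 0}` is the basic open of the restriction of `h` to the affine `{f ≠ 0}`, hence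
affine.
-/

universe u

lemma CategoryTheory.Aut.mul_hom {C : Type*} [Category C] {X : C} (a b : Aut X) :
    (a * b).hom = b.hom ≫ a.hom :=
  rfl

namespace AlgebraicGeometry

variable {X : Scheme.{u}}

lemma Scheme.mem_basicOpen_prod {ι : Type*} (s : Finset ι) (f : ι → Γ(X, ⊤)) {x : X} :
    x ∈ X.basicOpen (∏ i ∈ s, f i) ↔ ∀ i ∈ s, x ∈ X.basicOpen (f i) := by
  classical
  induction s using Finset.induction_on with
  | empty => simp [X.basicOpen_of_isUnit isUnit_one]
  | insert i s hi ih =>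
    rw [Finset.prod_insert hi, Scheme.basicOpen_mul, Finset.forall_mem_insert, ← ih]
    rfl

theorem IsAffineOpen.basicOpen_of_le {U V : X.Opens} (hU : IsAffineOpen U) (hUV : U ≤ V)
    {g : Γ(X, V)} (hg : X.basicOpen g ≤ U) : IsAffineOpen (X.basicOpen g) := by
  simpa [Scheme.basicOpen_res, inf_eq_right.mpr hg] using
    hU.basicOpen (X.presheaf.map (homOfLE hUV).op g)

namespace Scheme

lemma base_mem_basicOpen_iff_of_appTop_eq {f : X ⟶ X} {h : Γ(X, ⊤)} (hf : f.appTop h = h)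
    {x : X} : f.base x ∈ X.basicOpen h ↔ x ∈ X.basicOpen h := by
  rw [← Hom.mem_preimage, preimage_basicOpen_top, hf]

variable {G : Type*} [Group G] [Fintype G] (ρ : G →* Aut X)

noncomputable def orbitProd (f : Γ(X, ⊤)) : Γ(X, ⊤) := ∏ σ, (ρ σ).hom.appTop f

lemma appTop_orbitProd (τ : G) (f : Γ(X, ⊤)) :
    (ρ τ).hom.appTop (orbitProd ρ f) = orbitProd ρ f := by
  rw [orbitProd, map_prod]
  simp only [← CommRingCat.comp_apply, ← Hom.comp_appTop, ← Aut.mul_hom, ← map_mul]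
  exact Fintype.prod_equiv (Equiv.mulRight τ) _ _ fun _ => rfl

lemma mem_basicOpen_orbitProd {f : Γ(X, ⊤)} {x : X} :
    x ∈ X.basicOpen (orbitProd ρ f) ↔ ∀ σ, (ρ σ).hom.base x ∈ X.basicOpen f := by
  simp only [orbitProd, mem_basicOpen_prod, Finset.mem_univ, true_implies,
    ← preimage_basicOpen_top, Hom.mem_preimage]

lemma basicOpen_orbitProd_le (f : Γ(X, ⊤)) : X.basicOpen (orbitProd ρ f) ≤ X.basicOpen f :=
  fun x hx => by
    have hx₁ := (mem_basicOpen_orbitProd ρ).1 hx 1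
    rwa [map_one] at hx₁

end Scheme

end AlgebraicGeometry

theorem orbit_in_invariant_affine_basicOpen_general
    (G : Type) [Group G] [Finite G]
    (W : Scheme.{0})
    (ρ : G →* Aut W)
    (horb : ∀ x : W, ∃ f : Γ(W, ⊤),
      IsAffineOpen (W.basicOpen f) ∧ ∀ g : G, (ρ g).hom.base x ∈ W.basicOpen f) :
    ∀ x : W, ∃ h : Γ(W, ⊤), (∀ g : G, (ρ g).hom.appTop h = h) ∧
      IsAffineOpen (W.basicOpen h) ∧ ∀ g : G, (ρ g).hom.base x ∈ W.basicOpen h := by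
  intro x
  obtain ⟨f, hf_affine, hx⟩ := horb x
  have := Fintype.ofFinite G
  refine ⟨Scheme.orbitProd ρ f, (Scheme.appTop_orbitProd ρ · f),
    hf_affine.basicOpen_of_le le_top (Scheme.basicOpen_orbitProd_le ρ f), fun g => ?_⟩
  rw [Scheme.base_mem_basicOpen_iff_of_appTop_eq (Scheme.appTop_orbitProd ρ g f)]
  exact (Scheme.mem_basicOpen_orbitProd ρ).2 hx

/-- Let a finite group `G` act on a quasi-affine scheme `W` over a commutative ring `R`.
If every `G`-orbit is contained in an affine open subset of the form `{f ≠ 0}` for a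
global regular function `f`, then every `G`-orbit is contained in an affine open subset
of the form `{g ≠ 0}` for a `G`-invariant global regular function `g`. -/
theorem orbit_in_invariant_affine_basicOpen
    (R : Type) [CommRing R] (G : Type) [Group G] [Finite G]
    (W : Scheme.{0}) (p : W ⟶ Spec (CommRingCat.of R))
    (hqa : ∃ (Z : Scheme.{0}) (i : W ⟶ Z), IsAffine Z ∧ IsOpenImmersion i)
    (ρ : G →* Aut W) (hover : ∀ g : G, (ρ g).hom ≫ p = p)
    (horb : ∀ x : W, ∃ f : Γ(W, ⊤),
      IsAffineOpen (W.basicOpen f) ∧ ∀ g : G, (ρ g).hom.base x ∈ W.basicOpen f) :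
    ∀ x : W, ∃ h : Γ(W, ⊤), (∀ g : G, (ρ g).hom.appTop h = h) ∧
      IsAffineOpen (W.basicOpen h) ∧ ∀ g : G, (ρ g).hom.base x ∈ W.basicOpen h :=
  orbit_in_invariant_affine_basicOpen_general G W ρ horb
end

section
/- Let k be a field, and let Y be the scheme obtained by gluing two copies of A^r_k along A^r − 0 via the identity (r ≥ 2). Then every morphism from A^r − 0 to GL(n) over k extends uniquely to a morphism A^r → GL(n); consequently every vector bundle on Y that is trivial on each of the two copies of A^r is trivial on Y. -/
/-!
Hartogs for `𝔸^r`, `r ≥ 2`: the punctured space is covered by the basic opens `D(X_i)`, and a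
regular function on it is given by fractions `h_i / X_i ^ c_i` that agree on the overlaps, i.e.
`h_0 X_i ^ c_i = h_i X_0 ^ c_0`. Since `X_0` is prime and does not divide `X_1`, the relation for
`i = 1` forces `X_0 ^ c_0 ∣ h_0`, and then every fraction equals one polynomial `g`. So
`k[X] → 𝒪(𝔸^r − 0)` is an isomorphism, hence so is the induced map on invertible matrices.
-/

open AlgebraicGeometry CategoryTheory TopologicalSpace

/-- The punctured affine space `𝔸^r − 0`: the complement of the origin (the zero locus
of the coordinates `X i`) in `Spec k[X₁,…,X_r]`. -/
def punctured (k : Type) [Field k] (r : ℕ) :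
    Opens (PrimeSpectrum.Top (MvPolynomial (Fin r) k)) :=
  ⟨(PrimeSpectrum.zeroLocus
      (Set.range (MvPolynomial.X : Fin r → MvPolynomial (Fin r) k)))ᶜ,
    (PrimeSpectrum.isClosed_zeroLocus _).isOpen_compl⟩

open Opposite PrimeSpectrum

theorem exists_eq_mul_pow_of_mul_pow_eq {M ι : Type*} [CommMonoidWithZero M] [IsCancelMulZero M]
    {x h : ι → M} {c : ι → ℕ} {i j : ι} (hi : Prime (x i)) (hij : ¬x i ∣ x j)
    (cross : ∀ k, h i * x k ^ c k = h k * x i ^ c i) :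
    ∃ g, ∀ k, h k = g * x k ^ c k := by
  obtain ⟨g, hg⟩ : x i ^ c i ∣ h i :=
    hi.pow_dvd_of_dvd_mul_right _ (fun h' ↦ hij (hi.dvd_of_dvd_pow h'))
      ⟨h j, (cross j).trans (mul_comm _ _)⟩
  refine ⟨g, fun k ↦ mul_right_cancel₀ (pow_ne_zero (c i) hi.ne_zero) ?_⟩
  rw [← cross k, hg]
  ac_rfl

theorem Matrix.units_map_mapMatrix_bijective {A B m : Type*} [CommRing A] [CommRing B]
    [Fintype m] [DecidableEq m] {f : A →+* B} (hf : Function.Bijective f) :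
    Function.Bijective (Units.map (f.mapMatrix (m := m)).toMonoidHom) :=
  (Units.mapEquiv (M := Matrix m m A) (N := Matrix m m B)
    (RingEquiv.ofBijective f hf).mapMatrix.toMulEquiv).bijective

namespace AlgebraicGeometry.StructureSheaf

/-- `openAlgebra` is indexed by `Opens (PrimeSpectrum R)` and is not found by instance search
on sections over `Opens (PrimeSpectrum.Top R)`, which is how the statement is phrased. -/
noncomputable instance algebraPresheafObj {R : Type*} [CommRing R]
    (U : (Opens (PrimeSpectrum.Top R))ᵒᵖ) : Algebra R ((Spec.structureSheaf R).presheaf.obj U) :=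
  openAlgebra R U

variable {R : Type*} [CommRing R] [IsDomain R]

theorem algebraMap_basicOpen_injective {f : R} (hf : f ≠ 0) :
    Function.Injective (algebraMap R ((Spec.structureSheaf R).presheaf.obj (op (basicOpen f)))) :=
  IsLocalization.injective _ (powers_le_nonZeroDivisors_of_noZeroDivisors hf)

theorem mul_pow_eq_mul_pow_of_restrict {U : Opens (PrimeSpectrum.Top R)}
    (s : (Spec.structureSheaf R).presheaf.obj (op U)) {a b g h : R} {p q : ℕ}
    (ha : a ≠ 0) (hb : b ≠ 0) (haU : basicOpen a ≤ U) (hbU : basicOpen b ≤ U)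
    (hg : (Spec.structureSheaf R).presheaf.map (homOfLE haU).op s * algebraMap R _ a ^ p =
      algebraMap R _ g)
    (hh : (Spec.structureSheaf R).presheaf.map (homOfLE hbU).op s * algebraMap R _ b ^ q =
      algebraMap R _ h) :
    g * b ^ q = h * a ^ p := by
  have hWa := basicOpen_mul_le_left a b
  have hWb := basicOpen_mul_le_right a b
  set t := (Spec.structureSheaf R).presheaf.map (homOfLE (hWa.trans haU)).op s
  have hta : t * algebraMap R _ a ^ p = algebraMap R _ g := by
    have := congrArg ((Spec.structureSheaf R).presheaf.map (homOfLE hWa).op) hg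
    rw [map_mul, map_pow] at this
    exact this
  have htb : t * algebraMap R _ b ^ q = algebraMap R _ h := by
    have := congrArg ((Spec.structureSheaf R).presheaf.map (homOfLE hWb).op) hh
    rw [map_mul, map_pow] at this
    exact this
  apply algebraMap_basicOpen_injective (mul_ne_zero ha hb)
  calc algebraMap R _ (g * b ^ q) = t * algebraMap R _ a ^ p * algebraMap R _ b ^ q := by
        rw [map_mul, map_pow, hta]
    _ = t * algebraMap R _ b ^ q * algebraMap R _ a ^ p := by ring
    _ = algebraMap R _ (h * a ^ p) := by rw [htb, map_mul, map_pow]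

theorem algebraMap_iSup_basicOpen_bijective {ι : Type*} {x : ι → R} (hx : ∀ k, x k ≠ 0)
    {i j : ι} (hi : Prime (x i)) (hij : ¬x i ∣ x j) :
    Function.Bijective
      (algebraMap R ((Spec.structureSheaf R).presheaf.obj (op (⨆ k, basicOpen (x k))))) := by
  have hle k : basicOpen (x k) ≤ ⨆ k, basicOpen (x k) := le_iSup (fun k ↦ basicOpen (x k)) k
  let res k := (Spec.structureSheaf R).presheaf.map (homOfLE (hle k)).op
  refine ⟨fun g g' hgg' ↦ algebraMap_basicOpen_injective (hx i) (congrArg (res i) hgg'),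
    fun s ↦ ?_⟩
  choose c h hch using fun k ↦ IsLocalization.Away.surj (x k)
    (S := (Spec.structureSheaf R).presheaf.obj (op (basicOpen (x k)))) (res k s)
  obtain ⟨g, hg⟩ := exists_eq_mul_pow_of_mul_pow_eq hi hij fun k ↦
    mul_pow_eq_mul_pow_of_restrict s (hx i) (hx k) (hle i) (hle k) (hch i) (hch k)
  refine ⟨g, (Spec.structureSheaf R).eq_of_locally_eq' _ _ (fun k ↦ homOfLE (hle k)) le_rfl _ _
    fun k ↦ ?_⟩
  have hunit : IsUnit (algebraMap R ((Spec.structureSheaf R).presheaf.obj (op (basicOpen (x k))))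
      (x k) ^ c k) := (IsLocalization.Away.algebraMap_isUnit (x k)).pow _
  refine hunit.mul_right_cancel (Eq.trans ?_ (hch k).symm)
  rw [hg k, map_mul, map_pow]
  rfl

end AlgebraicGeometry.StructureSheaf

theorem punctured_eq_iSup_basicOpen_X (k : Type) [Field k] (r : ℕ) :
    punctured k r = ⨆ i, basicOpen (MvPolynomial.X i) := by
  ext (x : PrimeSpectrum (MvPolynomial (Fin r) k))
  show x ∉ zeroLocus (Set.range MvPolynomial.X) ↔
    x ∈ (⨆ i, basicOpen (MvPolynomial.X i) : Opens (PrimeSpectrum (MvPolynomial (Fin r) k)))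
  simp [mem_zeroLocus, Set.range_subset_iff]

theorem algebraMap_punctured_bijective (k : Type) [Field k] {r : ℕ} (hr : 2 ≤ r) :
    Function.Bijective (algebraMap (MvPolynomial (Fin r) k)
      ((Spec.structureSheaf (MvPolynomial (Fin r) k)).presheaf.obj (op (punctured k r)))) := by
  rw [punctured_eq_iSup_basicOpen_X]
  refine StructureSheaf.algebraMap_iSup_basicOpen_bijective MvPolynomial.X_ne_zero
    (i := ⟨0, by omega⟩) (j := ⟨1, by omega⟩) MvPolynomial.X_prime ?_
  simp [MvPolynomial.X_dvd_X]

/-- For `r ≥ 2`, every morphism `𝔸^r − 0 → GL(n)`, i.e. every invertible `n×n` matrix of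
regular functions on `𝔸^r − 0`, extends uniquely to a morphism `𝔸^r → GL(n)`, i.e. comes
from a unique invertible `n×n` matrix of polynomials.  (Consequently a vector bundle on
the scheme obtained by gluing two copies of `𝔸^r` along `𝔸^r − 0` which is trivial on
both copies has trivial transition function, hence is trivial.) -/
theorem matrix_units_extend (k : Type) [Field k] (r n : ℕ) (hr : 2 ≤ r)
    (M : (Matrix (Fin n) (Fin n)
      ((Spec.structureSheaf (MvPolynomial (Fin r) k)).presheaf.obj
        (Opposite.op (punctured k r))))ˣ) :
    ∃! N : (Matrix (Fin n) (Fin n) (MvPolynomial (Fin r) k))ˣ,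
      Units.map (RingHom.mapMatrix
        (StructureSheaf.toOpen (MvPolynomial (Fin r) k) (punctured k r)).hom).toMonoidHom
          N = M :=
  (Matrix.units_map_mapMatrix_bijective (algebraMap_punctured_bijective k hr)).existsUnique M
end
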